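/- The H-Baer radical of an H-module algebra R equals the intersection of all H-prime ideals of R: r_{Hb}(R) = ∩{ P : P is an H-ideal of R with R/P an H-prime module algebra }. -/

import Mathlib

/-!
An `H`-prime ideal `P` contains the `H`-Baer radical `B`: otherwise the radical property, applied
to `P ∩ B ⊊ B`, gives an `H`-ideal `K` of `B` with `P ∩ B ⊊ K` and `K` nilpotent modulo `P`. The
ideal of `R` spanned by `K` is again an `H`-ideal (as `h (a b) = ∑ (h₁ a) (h₂ b)`), and it is
nilpotent modulo `P` because its triple products `a z c` with `a, c ∈ B` fall in `K`; primeness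
then puts it, hence `K`, inside `P ∩ B`.

Conversely the intersection `N` of the `H`-prime ideals is radical: if an `H`-ideal `J ⊊ N` of `N`
admitted no such `K`, then for every `y ∈ N \ J` the square of `(y) + J` would leave `J`. Iterating
yields an `H`-m-system inside `N \ J`; an `H`-ideal maximal among those avoiding it is `H`-prime,
yet misses a point of `N`.
-/

open scoped TensorProduct

class HModAlg (k H R : Type*) [CommRing k] [Ring H] [Algebra k H]
    [Coalgebra k H] [NonUnitalRing R] [Module k R]
    [SMulCommClass k R R] [IsScalarTower k R R] where
  hsmul : H →ₗ[k] R →ₗ[k] R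
  one_hsmul : ∀ r : R, hsmul 1 r = r
  mul_hsmul : ∀ (h h' : H) (r : R), hsmul (h * h') r = hsmul h (hsmul h' r)
  hsmul_mul : ∀ (h : H) (a b : R),
    hsmul h (a * b) =
      LinearMap.mul' k R
        (TensorProduct.map (hsmul.flip a) (hsmul.flip b) (Coalgebra.comul h))

/-- product f 0 * f 1 * ⋯ * f n -/
def prodSeq {R : Type*} [Mul R] (f : ℕ → R) : ℕ → R
  | 0 => f 0
  | n + 1 => prodSeq f n * f (n + 1)

/-- `I` is a nilpotent subset: some power of it vanishes. -/
def IsNilpotentSet {R : Type*} [Mul R] [Zero R] (I : Set R) : Prop :=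
  ∃ n : ℕ, ∀ f : ℕ → R, (∀ i, f i ∈ I) → prodSeq f n = 0

/-- `I` is nilpotent modulo `J`. -/
def IsNilpotentSetMod {R : Type*} [Mul R] (I J : Set R) : Prop :=
  ∃ n : ℕ, ∀ f : ℕ → R, (∀ i, f i ∈ I) → prodSeq f n ∈ J

section Defs

variable (k H : Type*) {R : Type*} [CommRing k] [Ring H] [Algebra k H]
  [Coalgebra k H] [NonUnitalRing R] [Module k R]
  [SMulCommClass k R R] [IsScalarTower k R R] [HModAlg k H R]

/-- The action of `h : H` on `r : R`. -/
def hact (h : H) (r : R) : R := HModAlg.hsmul (k := k) h r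

/-- `I` is an `H`-ideal of the `H`-module (sub)algebra `B ⊆ R`. -/
structure IsHIdealIn (B I : Set R) : Prop where
  subset : I ⊆ B
  zero_mem : (0 : R) ∈ I
  add_mem : ∀ {x y : R}, x ∈ I → y ∈ I → x + y ∈ I
  neg_mem : ∀ {x : R}, x ∈ I → -x ∈ I
  mul_mem_left : ∀ {x : R}, x ∈ B → ∀ {y : R}, y ∈ I → x * y ∈ I
  mul_mem_right : ∀ {x : R}, x ∈ I → ∀ {y : R}, y ∈ B → x * y ∈ I
  hsmul_mem : ∀ (h : H) {x : R}, x ∈ I → hact k H h x ∈ I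

/-- `I` is an `H`-ideal of `R`. -/
def IsHIdeal (I : Set R) : Prop := IsHIdealIn k H Set.univ I

/-- `R` is `H`-semiprime. -/
def IsHSemiprime : Prop :=
  ∀ I : Set R, IsHIdeal k H I → IsNilpotentSet I → I = {0}

/-- The subalgebra `B` of `R` is `H`-semiprime. -/
def IsHSemiprimeIn (B : Set R) : Prop :=
  ∀ I : Set R, IsHIdealIn k H B I → IsNilpotentSet I → I = {0}

/-- `R` is `H`-prime. -/
def IsHPrime : Prop :=
  ∀ I J : Set R, IsHIdeal k H I → IsHIdeal k H J →
    (∀ a ∈ I, ∀ b ∈ J, a * b = 0) → I = {0} ∨ J = {0}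

/-- The `H`-ideal of `R` generated by `E`. -/
def genHIdeal (E : Set R) : Set R := ⋂₀ {I : Set R | IsHIdeal k H I ∧ E ⊆ I}

end Defs


section Radical

variable (k H : Type*) {R : Type*} [CommRing k] [Ring H] [Algebra k H]
  [Coalgebra k H] [NonUnitalRing R] [Module k R]
  [SMulCommClass k R R] [IsScalarTower k R R] [HModAlg k H R]

/-- The `H`-ideal `I` is a radical (`r_{Hb}`-) `H`-ideal: every non-zero
`H`-homomorphic image of `I` (equivalently, every quotient `I/J` of `I` by a proper
`H`-ideal `J` of `I`) contains a non-zero nilpotent `H`-ideal `K/J`. -/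
def IsRadicalHIdeal (I : Set R) : Prop :=
  IsHIdeal k H I ∧
    ∀ J : Set R, IsHIdealIn k H I J → J ≠ I →
      ∃ K : Set R, IsHIdealIn k H I K ∧ J ⊆ K ∧ J ≠ K ∧ IsNilpotentSetMod K J

/-- `B` is the `H`-Baer radical of `R`: the largest radical `H`-ideal of `R`. -/
def IsHBaerRadical (B : Set R) : Prop :=
  IsRadicalHIdeal k H B ∧ ∀ I : Set R, IsRadicalHIdeal k H I → I ⊆ B

end Radical

/-- `P` is an `H`-prime ideal of `R` (i.e. `R/P` is an `H`-prime module algebra). -/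
def IsHPrimeIdeal (k H : Type*) {R : Type*} [CommRing k] [Ring H] [Algebra k H]
    [Coalgebra k H] [NonUnitalRing R] [Module k R] [SMulCommClass k R R]
    [IsScalarTower k R R] [HModAlg k H R] (P : Set R) : Prop :=
  IsHIdeal k H P ∧
    ∀ I J : Set R, IsHIdeal k H I → IsHIdeal k H J →
      (∀ a ∈ I, ∀ b ∈ J, a * b ∈ P) → I ⊆ P ∨ J ⊆ P

open Pointwise
open TwoSidedIdeal (span span_induction subset_span mul_mem_left mul_mem_right)

section ProdSeq

variable {R : Type*}

lemma prodSeq_congr [Mul R] {f g : ℕ → R} :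
    ∀ n, (∀ i ≤ n, f i = g i) → prodSeq f n = prodSeq g n
  | 0, h => h 0 le_rfl
  | n + 1, h => by
    rw [prodSeq, prodSeq, prodSeq_congr n fun i hi => h i (by omega), h (n + 1) le_rfl]

lemma prodSeq_update_succ [Mul R] (f : ℕ → R) (n : ℕ) (b : R) :
    prodSeq (Function.update f (n + 1) b) (n + 1) = prodSeq f n * b := by
  rw [prodSeq, Function.update_self,
    prodSeq_congr n fun i hi => Function.update_of_ne (by omega) b f]

lemma prodSeq_mul_mul [Semigroup R] (f : ℕ → R) :
    ∀ n, prodSeq (fun i => f (3 * i) * f (3 * i + 1) * f (3 * i + 2)) n = prodSeq f (3 * n + 2)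
  | 0 => by simp [prodSeq, mul_assoc]
  | n + 1 => by
    rw [prodSeq, prodSeq_mul_mul f n, show 3 * (n + 1) = 3 * n + 2 + 1 by ring]
    simp only [prodSeq, mul_assoc]

lemma IsNilpotentSetMod.mono [Mul R] {I J J' : Set R} (h : IsNilpotentSetMod I J)
    (hJ : J ⊆ J') : IsNilpotentSetMod I J' :=
  h.imp fun _ hn f hf => hJ (hn f hf)

lemma IsNilpotentSetMod.of_mul_mul_mem [Semigroup R] {I J L : Set R}
    (hI : IsNilpotentSetMod I J) (hL : ∀ x ∈ L, ∀ y ∈ L, ∀ z ∈ L, x * y * z ∈ I) :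
    IsNilpotentSetMod L J := by
  obtain ⟨n, hn⟩ := hI
  exact ⟨3 * n + 2, fun f hf =>
    prodSeq_mul_mul f n ▸ hn _ fun i => hL _ (hf _) _ (hf _) _ (hf _)⟩

end ProdSeq

section

variable {k H R : Type*} [CommRing k] [Ring H] [Algebra k H] [Coalgebra k H]
  [NonUnitalRing R] [Module k R] [SMulCommClass k R R] [IsScalarTower k R R] [HModAlg k H R]

lemma hact_zero (h : H) : hact k H h (0 : R) = 0 := map_zero (HModAlg.hsmul (k := k) h)

lemma hact_add (h : H) (x y : R) : hact k H h (x + y) = hact k H h x + hact k H h y :=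
  map_add (HModAlg.hsmul (k := k) h) x y

lemma hact_neg (h : H) (x : R) : hact k H h (-x) = -hact k H h x :=
  map_neg (HModAlg.hsmul (k := k) h) x

lemma hact_mul_mem {S : Type*} [SetLike S R] [AddSubmonoidClass S R] (M : S) (h : H)
    {a b : R} (hab : ∀ h₁ h₂ : H, hact k H h₁ a * hact k H h₂ b ∈ M) :
    hact k H h (a * b) ∈ M := by
  change HModAlg.hsmul h (a * b) ∈ M
  rw [HModAlg.hsmul_mul]
  induction Coalgebra.comul (R := k) h using TensorProduct.induction_on with
  | zero => simp [zero_mem M]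
  | tmul h₁ h₂ => exact hab h₁ h₂
  | add x y hx hy => rw [map_add, map_add]; exact add_mem hx hy

variable (k H) in
lemma isHIdeal_zero : IsHIdeal k H ({0} : Set R) where
  subset := Set.subset_univ _
  zero_mem := rfl
  add_mem hx hy := by rw [hx, hy, add_zero]; rfl
  neg_mem hx := by rw [hx, neg_zero]; rfl
  mul_mem_left _ _ hy := by rw [hy, mul_zero]; rfl
  mul_mem_right hx _ _ := by rw [hx, zero_mul]; rfl
  hsmul_mem h _ hx := by rw [hx, hact_zero]; rfl

namespace IsHIdeal

variable {I : Set R}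

lemma mul_mem_left (hI : IsHIdeal k H I) (x : R) {y : R} (hy : y ∈ I) : x * y ∈ I :=
  IsHIdealIn.mul_mem_left hI (Set.mem_univ x) hy

lemma mul_mem_right (hI : IsHIdeal k H I) {x : R} (hx : x ∈ I) (y : R) : x * y ∈ I :=
  IsHIdealIn.mul_mem_right hI hx (Set.mem_univ y)

lemma isHIdealIn {B : Set R} (hI : IsHIdeal k H I) (hIB : I ⊆ B) : IsHIdealIn k H B I where
  subset := hIB
  zero_mem := hI.zero_mem
  add_mem := hI.add_mem
  neg_mem := hI.neg_mem
  mul_mem_left _ _ hy := hI.mul_mem_left _ hy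
  mul_mem_right hx _ _ := hI.mul_mem_right hx _
  hsmul_mem := hI.hsmul_mem

lemma inter {J : Set R} (hI : IsHIdeal k H I) (hJ : IsHIdeal k H J) : IsHIdeal k H (I ∩ J) where
  subset := Set.subset_univ _
  zero_mem := ⟨hI.zero_mem, hJ.zero_mem⟩
  add_mem hx hy := ⟨hI.add_mem hx.1 hy.1, hJ.add_mem hx.2 hy.2⟩
  neg_mem hx := ⟨hI.neg_mem hx.1, hJ.neg_mem hx.2⟩
  mul_mem_left _ _ hy := ⟨hI.mul_mem_left _ hy.1, hJ.mul_mem_left _ hy.2⟩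
  mul_mem_right hx _ _ := ⟨hI.mul_mem_right hx.1 _, hJ.mul_mem_right hx.2 _⟩
  hsmul_mem h _ hx := ⟨hI.hsmul_mem h hx.1, hJ.hsmul_mem h hx.2⟩

end IsHIdeal

lemma isHIdeal_sInter {S : Set (Set R)} (hS : ∀ I ∈ S, IsHIdeal k H I) :
    IsHIdeal k H (⋂₀ S) where
  subset := Set.subset_univ _
  zero_mem := Set.mem_sInter.2 fun I hI => (hS I hI).zero_mem
  add_mem hx hy := Set.mem_sInter.2 fun I hI => (hS I hI).add_mem (hx I hI) (hy I hI)
  neg_mem hx := Set.mem_sInter.2 fun I hI => (hS I hI).neg_mem (hx I hI)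
  mul_mem_left _ _ hy := Set.mem_sInter.2 fun I hI => (hS I hI).mul_mem_left _ (hy I hI)
  mul_mem_right hx _ _ := Set.mem_sInter.2 fun I hI => (hS I hI).mul_mem_right (hx I hI) _
  hsmul_mem h _ hx := Set.mem_sInter.2 fun I hI => (hS I hI).hsmul_mem h (hx I hI)

lemma isHIdeal_sUnion {c : Set (Set R)} (hc : IsChain (· ⊆ ·) c) (hne : c.Nonempty)
    (hI : ∀ I ∈ c, IsHIdeal k H I) : IsHIdeal k H (⋃₀ c) where
  subset := Set.subset_univ _
  zero_mem := hne.elim fun I hIc => ⟨I, hIc, (hI I hIc).zero_mem⟩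
  add_mem := by
    rintro x y ⟨I, hIc, hx⟩ ⟨J, hJc, hy⟩
    rcases hc.total hIc hJc with hIJ | hJI
    · exact ⟨J, hJc, (hI J hJc).add_mem (hIJ hx) hy⟩
    · exact ⟨I, hIc, (hI I hIc).add_mem hx (hJI hy)⟩
  neg_mem := fun ⟨I, hIc, hx⟩ => ⟨I, hIc, (hI I hIc).neg_mem hx⟩
  mul_mem_left _ _ := fun ⟨I, hIc, hy⟩ => ⟨I, hIc, (hI I hIc).mul_mem_left _ hy⟩
  mul_mem_right := fun ⟨I, hIc, hx⟩ _ _ => ⟨I, hIc, (hI I hIc).mul_mem_right hx _⟩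
  hsmul_mem h _ := fun ⟨I, hIc, hx⟩ => ⟨I, hIc, (hI I hIc).hsmul_mem h hx⟩

namespace IsHIdealIn

variable {B I J : Set R}

lemma add (hB : ∀ x ∈ B, ∀ y ∈ B, x + y ∈ B) (hI : IsHIdealIn k H B I)
    (hJ : IsHIdealIn k H B J) : IsHIdealIn k H B (I + J) where
  subset := by
    rintro _ ⟨a, ha, p, hp, rfl⟩
    exact hB _ (hI.subset ha) _ (hJ.subset hp)
  zero_mem := ⟨0, hI.zero_mem, 0, hJ.zero_mem, add_zero 0⟩
  add_mem := by
    rintro _ _ ⟨a, ha, p, hp, rfl⟩ ⟨a', ha', p', hp', rfl⟩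
    exact ⟨a + a', hI.add_mem ha ha', p + p', hJ.add_mem hp hp',
      (add_add_add_comm a p a' p').symm⟩
  neg_mem := by
    rintro _ ⟨a, ha, p, hp, rfl⟩
    exact ⟨-a, hI.neg_mem ha, -p, hJ.neg_mem hp, (neg_add a p).symm⟩
  mul_mem_left := by
    rintro x hx _ ⟨a, ha, p, hp, rfl⟩
    exact ⟨x * a, hI.mul_mem_left hx ha, x * p, hJ.mul_mem_left hx hp, (mul_add x a p).symm⟩
  mul_mem_right := by
    rintro _ ⟨a, ha, p, hp, rfl⟩ y hy
    exact ⟨a * y, hI.mul_mem_right ha hy, p * y, hJ.mul_mem_right hp hy, (add_mul a p y).symm⟩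
  hsmul_mem := by
    rintro h _ ⟨a, ha, p, hp, rfl⟩
    exact ⟨_, hI.hsmul_mem h ha, _, hJ.hsmul_mem h hp, (hact_add h a p).symm⟩

lemma mul_mem_of_mem_add {I' : Set R} (hJ : IsHIdealIn k H B J) (hI : I ⊆ B) (hI' : I' ⊆ B)
    (hII' : ∀ a ∈ I, ∀ b ∈ I', a * b ∈ J) {x y : R} (hx : x ∈ I + J)
    (hy : y ∈ I' + J) :
    x * y ∈ J := by
  obtain ⟨a, ha, p, hp, rfl⟩ := hx
  obtain ⟨b, hb, q, hq, rfl⟩ := hy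
  rw [add_mul, mul_add, mul_add]
  exact hJ.add_mem (hJ.add_mem (hII' a ha b hb) (hJ.mul_mem_left (hI ha) hq))
    (hJ.add_mem (hJ.mul_mem_right hp (hI' hb)) (hJ.mul_mem_right hp (hJ.subset hq)))

end IsHIdealIn

lemma IsHIdeal.add {I J : Set R} (hI : IsHIdeal k H I) (hJ : IsHIdeal k H J) :
    IsHIdeal k H (I + J) :=
  IsHIdealIn.add (fun _ _ _ _ => trivial) hI hJ

variable (k H) in
lemma isHIdeal_genHIdeal (E : Set R) : IsHIdeal k H (genHIdeal k H E) :=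
  isHIdeal_sInter fun _ hI => hI.1

lemma subset_genHIdeal (E : Set R) : E ⊆ genHIdeal k H E :=
  fun _ hx => Set.mem_sInter.2 fun _ hI => hI.2 hx

lemma genHIdeal_subset {E I : Set R} (hI : IsHIdeal k H I) (hE : E ⊆ I) :
    genHIdeal k H E ⊆ I :=
  Set.sInter_subset_of_mem ⟨hI, hE⟩

lemma span_subset_of_isHIdeal {s I : Set R} (hI : IsHIdeal k H I) (hs : s ⊆ I) :
    (span s : Set R) ⊆ I := fun _ hx => by
  induction hx using span_induction with
  | mem x hx => exact hs hx
  | zero => exact hI.zero_mem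
  | add x y _ _ hx hy => exact hI.add_mem hx hy
  | neg x _ hx => exact hI.neg_mem hx
  | left_absorb a x _ hx => exact hI.mul_mem_left a hx
  | right_absorb b x _ hx => exact hI.mul_mem_right hx b

lemma TwoSidedIdeal.isHIdeal (I : TwoSidedIdeal R)
    (hI : ∀ (h : H), ∀ x ∈ I, hact k H h x ∈ I) :
    IsHIdeal k H (I : Set R) where
  subset := Set.subset_univ _
  zero_mem := I.zero_mem
  add_mem := I.add_mem
  neg_mem := I.neg_mem
  mul_mem_left {x} _ {y} hy := I.mul_mem_left x y hy
  mul_mem_right {x} hx {y} _ := I.mul_mem_right x y hx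
  hsmul_mem h _ hx := hI h _ hx

lemma isHIdeal_span {s : Set R} (hs : ∀ (h : H), ∀ x ∈ s, hact k H h x ∈ span s) :
    IsHIdeal k H (span s : Set R) := by
  refine (span s).isHIdeal fun h x hx => ?_
  induction hx using span_induction generalizing h with
  | mem x hx => exact hs h x hx
  | zero => rw [hact_zero]; exact zero_mem _
  | add x y _ _ hx hy => rw [hact_add]; exact add_mem (hx h) (hy h)
  | neg x _ hx => rw [hact_neg]; exact neg_mem (hx h)
  | left_absorb a x _ hx => exact hact_mul_mem _ h fun _ h₂ => mul_mem_left _ _ _ (hx h₂)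
  | right_absorb b x _ hx => exact hact_mul_mem _ h fun h₁ _ => mul_mem_right _ _ _ (hx h₁)

/-- The two-sided ideal spanned by the products `f 0 * ⋯ * f n` of `n + 1` elements of `L`. -/
def prodSeqSpan (L : Set R) (n : ℕ) : TwoSidedIdeal R :=
  span {x | ∃ f : ℕ → R, (∀ i, f i ∈ L) ∧ prodSeq f n = x}

section ProdSeqSpan

variable {L : Set R}

lemma prodSeq_mem_prodSeqSpan {f : ℕ → R} (hf : ∀ i, f i ∈ L) (n : ℕ) :
    prodSeq f n ∈ prodSeqSpan L n :=
  subset_span ⟨f, hf, rfl⟩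

lemma subset_prodSeqSpan_zero : L ⊆ prodSeqSpan L 0 :=
  fun x hx => prodSeq_mem_prodSeqSpan (f := fun _ => x) (fun _ => hx) 0

lemma mul_mem_prodSeqSpan_succ (hL : ∀ r, ∀ b ∈ L, r * b ∈ L) {n : ℕ} {a b : R}
    (ha : a ∈ prodSeqSpan L n) (hb : b ∈ L) : a * b ∈ prodSeqSpan L (n + 1) := by
  induction ha using span_induction generalizing b with
  | mem x hx =>
    obtain ⟨f, hf, rfl⟩ := hx
    rw [← prodSeq_update_succ]
    refine prodSeq_mem_prodSeqSpan (fun i => ?_) _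
    rcases eq_or_ne i (n + 1) with rfl | hi
    · rwa [Function.update_self]
    · rw [Function.update_of_ne hi]; exact hf i
  | zero => rw [zero_mul]; exact zero_mem _
  | add x y _ _ hx hy => rw [add_mul]; exact add_mem (hx hb) (hy hb)
  | neg x _ hx => rw [neg_mul]; exact neg_mem (hx hb)
  | left_absorb r x _ hx => rw [mul_assoc]; exact mul_mem_left _ _ _ (hx hb)
  | right_absorb r x _ hx => rw [mul_assoc]; exact hx (hL r b hb)

lemma isHIdeal_prodSeqSpan (hL : IsHIdeal k H L) :
    ∀ n, IsHIdeal k H (prodSeqSpan L n : Set R)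
  | 0 => isHIdeal_span fun h _ ⟨_, hf, hx⟩ =>
    hx ▸ subset_prodSeqSpan_zero (hL.hsmul_mem h (hf 0))
  | n + 1 => isHIdeal_span fun h _ ⟨_, hf, hx⟩ => hx ▸ hact_mul_mem _ h fun h₁ h₂ =>
    mul_mem_prodSeqSpan_succ (fun r _ hb => hL.mul_mem_left r hb)
      ((isHIdeal_prodSeqSpan hL n).hsmul_mem h₁ (prodSeq_mem_prodSeqSpan hf n))
      (hL.hsmul_mem h₂ (hf (n + 1)))

lemma IsHPrimeIdeal.subset_of_prodSeqSpan_subset {P : Set R} (hP : IsHPrimeIdeal k H P)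
    (hL : IsHIdeal k H L) : ∀ n, (prodSeqSpan L n : Set R) ⊆ P → L ⊆ P
  | 0, h => subset_prodSeqSpan_zero.trans h
  | n + 1, h =>
    (hP.2 _ L (isHIdeal_prodSeqSpan hL n) hL fun _ ha _ hb =>
      h (mul_mem_prodSeqSpan_succ (fun r _ hb => hL.mul_mem_left r hb) ha hb)).elim
      (hP.subset_of_prodSeqSpan_subset hL n) id

lemma IsHPrimeIdeal.subset_of_isNilpotentSetMod {P : Set R} (hP : IsHPrimeIdeal k H P)
    (hL : IsHIdeal k H L) (hLP : IsNilpotentSetMod L P) : L ⊆ P :=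
  let ⟨n, hn⟩ := hLP
  hP.subset_of_prodSeqSpan_subset hL n <|
    span_subset_of_isHIdeal hP.1 fun _ ⟨f, hf, hx⟩ => hx ▸ hn f hf

end ProdSeqSpan

lemma IsHIdealIn.mul_mul_mem_of_mem_span {B K : Set R} (hK : IsHIdealIn k H B K)
    (hB : IsHIdeal k H B) {a c z : R} (ha : a ∈ B) (hc : c ∈ B) (hz : z ∈ span K) :
    a * z * c ∈ K := by
  induction hz using span_induction generalizing a c with
  | mem x hx => exact hK.mul_mem_right (hK.mul_mem_left ha hx) hc
  | zero => rw [mul_zero, zero_mul]; exact hK.zero_mem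
  | add x y _ _ hx hy => rw [mul_add, add_mul]; exact hK.add_mem (hx ha hc) (hy ha hc)
  | neg x _ hx => rw [mul_neg, neg_mul]; exact hK.neg_mem (hx ha hc)
  | left_absorb r x _ hx => rw [← mul_assoc a]; exact hx (hB.mul_mem_right ha r) hc
  | right_absorb r x _ hx =>
    rw [mul_assoc a, mul_assoc, ← mul_assoc a]
    exact hx ha (hB.mul_mem_left r hc)

lemma IsHBaerRadical.subset_of_isHPrimeIdeal {B P : Set R} (hB : IsHBaerRadical k H B)
    (hP : IsHPrimeIdeal k H P) : B ⊆ P := by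
  by_contra hBP
  have hBI : IsHIdeal k H B := hB.1.1
  obtain ⟨K, hK, hPK, hPK_ne, hKnil⟩ := hB.1.2 (P ∩ B) ((hP.1.inter hBI).isHIdealIn
    Set.inter_subset_right) fun h => hBP (h ▸ Set.inter_subset_left)
  have hspanB : (span K : Set R) ⊆ B := span_subset_of_isHIdeal hBI hK.subset
  have hspanP : (span K : Set R) ⊆ P :=
    hP.subset_of_isNilpotentSetMod (isHIdeal_span fun h _ hx => subset_span (hK.hsmul_mem h hx))
      ((hKnil.mono Set.inter_subset_left).of_mul_mul_mem fun _ hx _ hy _ hz =>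
        hK.mul_mul_mem_of_mem_span hBI (hspanB hx) (hspanB hz) hy)
  exact hPK_ne (hPK.antisymm fun x hx => ⟨hspanP (subset_span hx), hK.subset hx⟩)

variable (k H) in
/-- The `H`-analogue of an m-system. -/
def IsHMSystem (S : Set R) : Prop :=
  ∀ s ∈ S, ∀ t ∈ S, ∃ a ∈ genHIdeal k H {s}, ∃ b ∈ genHIdeal k H {t}, a * b ∈ S

/-- Iterating `y ↦ a y * b y` from `y₀` gives a decreasing chain of generated `H`-ideals. -/
lemma exists_isHMSystem {X : Set R}
    (hX : ∀ y ∈ X, ∃ a ∈ genHIdeal k H {y}, ∃ b ∈ genHIdeal k H {y}, a * b ∈ X)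
    {y₀ : R} (hy₀ : y₀ ∈ X) : ∃ S, IsHMSystem k H S ∧ S ⊆ X ∧ y₀ ∈ S := by
  choose! a ha b hb hab using hX
  set y : ℕ → R := fun n => (fun z => a z * b z)^[n] y₀
  have hy_succ (n : ℕ) : y (n + 1) = a (y n) * b (y n) :=
    Function.iterate_succ_apply' _ n y₀
  have hyX (n : ℕ) : y n ∈ X := by
    induction n with
    | zero => exact hy₀
    | succ n ih => rw [hy_succ]; exact hab _ ih
  have hanti : Antitone fun n => genHIdeal k H {y n} := antitone_nat_of_succ_le fun n =>
    genHIdeal_subset (isHIdeal_genHIdeal k H _) <| Set.singleton_subset_iff.2 <| by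
      rw [hy_succ]; exact (isHIdeal_genHIdeal k H _).mul_mem_right (ha _ (hyX n)) _
  refine ⟨Set.range y, ?_, Set.range_subset_iff.2 hyX, 0, rfl⟩
  rintro _ ⟨m, rfl⟩ _ ⟨m', rfl⟩
  exact ⟨_, hanti (le_max_left m m') (ha _ (hyX _)), _, hanti (le_max_right m m') (hb _ (hyX _)),
    max m m' + 1, hy_succ _⟩

lemma exists_isHPrimeIdeal_disjoint {S : Set R} (hS : IsHMSystem k H S) (h0 : (0 : R) ∉ S) :
    ∃ P, IsHPrimeIdeal k H P ∧ Disjoint P S := by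
  obtain ⟨P, -, ⟨hP, hPS⟩, hmax⟩ :=
    zorn_subset_nonempty {Q | IsHIdeal k H Q ∧ Disjoint Q S}
      (fun c hc hchain hne => ⟨⋃₀ c,
        ⟨isHIdeal_sUnion hchain hne fun _ hI => (hc hI).1,
          Set.disjoint_sUnion_left.2 fun _ hI => (hc hI).2⟩,
        fun _ => Set.subset_sUnion_of_mem⟩)
      {0} ⟨isHIdeal_zero k H, Set.disjoint_singleton_left.2 h0⟩
  have meets : ∀ I, IsHIdeal k H I → ¬ I ⊆ P → ∃ s ∈ S, s ∈ I + P := by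
    intro I hI hIP
    by_contra! hIS
    exact hIP ((Set.subset_add_left I hP.zero_mem).trans
      (hmax ⟨hI.add hP, Set.disjoint_right.2 hIS⟩
        (Set.subset_add_right P hI.zero_mem)))
  refine ⟨P, ⟨hP, fun I I' hI hI' hII' => ?_⟩, hPS⟩
  by_contra! hne
  obtain ⟨s, hs, hsI⟩ := meets I hI hne.1
  obtain ⟨t, ht, htI'⟩ := meets I' hI' hne.2
  obtain ⟨a, ha, b, hb, habS⟩ := hS s hs t ht
  refine Set.disjoint_left.1 hPS (IsHIdealIn.mul_mem_of_mem_add hP (Set.subset_univ I)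
    (Set.subset_univ I') hII' ?_ ?_) habS
  · exact genHIdeal_subset (hI.add hP) (Set.singleton_subset_iff.2 hsI) ha
  · exact genHIdeal_subset (hI'.add hP) (Set.singleton_subset_iff.2 htI') hb

lemma isRadicalHIdeal_sInter_isHPrimeIdeal :
    IsRadicalHIdeal k H (⋂₀ {P : Set R | IsHPrimeIdeal k H P}) := by
  set N := ⋂₀ {P : Set R | IsHPrimeIdeal k H P}
  have hN : IsHIdeal k H N := isHIdeal_sInter fun _ hP => hP.1
  refine ⟨hN, fun J hJ hJN => ?_⟩
  by_contra! hnone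
  have hstep : ∀ y ∈ N \ J,
      ∃ a ∈ genHIdeal k H {y}, ∃ b ∈ genHIdeal k H {y}, a * b ∈ N \ J := by
    rintro y ⟨hyN, hyJ⟩
    have hG := isHIdeal_genHIdeal k H {y}
    have hGN : genHIdeal k H {y} ⊆ N := genHIdeal_subset hN (Set.singleton_subset_iff.2 hyN)
    obtain ⟨a, ha, b, hb, hab⟩ :
        ∃ a ∈ genHIdeal k H {y}, ∃ b ∈ genHIdeal k H {y}, a * b ∉ J := by
      by_contra! hGJ
      refine hnone _ ((hG.isHIdealIn hGN).add (fun _ hx _ hy => hN.add_mem hx hy) hJ)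
        (Set.subset_add_right _ hG.zero_mem) ?_
        ⟨1, fun f hf => hJ.mul_mem_of_mem_add hGN hGN hGJ (hf 0) (hf 1)⟩
      exact fun h => hyJ (h ▸ ⟨y, subset_genHIdeal _ rfl, 0, hJ.zero_mem, add_zero y⟩)
    exact ⟨a, ha, b, hb, hN.mul_mem_right (hGN ha) b, hab⟩
  obtain ⟨y₀, hy₀⟩ : (N \ J).Nonempty :=
    Set.sdiff_nonempty.2 fun h => hJN (hJ.subset.antisymm h)
  obtain ⟨S, hS, hSX, hy₀S⟩ := exists_isHMSystem hstep hy₀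
  obtain ⟨P, hP, hPS⟩ := exists_isHPrimeIdeal_disjoint hS fun h0 => (hSX h0).2 hJ.zero_mem
  exact Set.disjoint_left.1 hPS (hy₀.1 P hP) hy₀S

end

/-- the `H`-Baer radical equals the intersection of all
`H`-prime ideals of `R`. -/
theorem stmt9 {k H R : Type*} [CommRing k] [Ring H] [Algebra k H] [Coalgebra k H]
    [NonUnitalRing R] [Module k R] [SMulCommClass k R R] [IsScalarTower k R R]
    [HModAlg k H R] (B : Set R) (hB : IsHBaerRadical k H B) :
    B = ⋂₀ {P : Set R | IsHPrimeIdeal k H P} :=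
  (Set.subset_sInter fun _ hP => hB.subset_of_isHPrimeIdeal hP).antisymm
    (hB.2 _ isRadicalHIdeal_sInter_isHPrimeIdeal)
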